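/- arXiv:1103.2799 — 4 statements merged into one kernel-verified Lean document; each statement's English description precedes it below -/
import Mathlib

section
/- The topology induced by the family of local C-functions equals the topology induced by C itself: τ_{C_M} = τ_C. -/
/-- The initial (weakest) topology on `M` making all functions in `C` continuous. -/
def tau {M : Type*} (C : Set (M → ℝ)) : TopologicalSpace M :=
  ⨅ f ∈ C, TopologicalSpace.induced f inferInstance

/-- Local `C`-functions on `M`: functions locally agreeing with elements of `C`. -/
def localFuncs {M : Type*} (C : Set (M → ℝ)) : Set (M → ℝ) :=
  {f | ∀ p : M, ∃ V : Set M, (tau C).IsOpen V ∧ p ∈ V ∧ ∃ α ∈ C, ∀ x ∈ V, f x = α x}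

/-- The closure of `C` under superposition with smooth functions. -/
def sc {M : Type*} (C : Set (M → ℝ)) : Set (M → ℝ) :=
  {f | ∃ (n : ℕ) (ω : (Fin n → ℝ) → ℝ) (α : Fin n → (M → ℝ)),
    ContDiff ℝ (⊤ : ℕ∞) ω ∧ (∀ i, α i ∈ C) ∧ f = fun p => ω (fun i => α i p)}

/-- A Sikorski differential structure. -/
def IsDiffStructure {M : Type*} (C : Set (M → ℝ)) : Prop :=
  localFuncs C = C ∧ sc C = C

/-- τ_{C_M} = τ_C. -/
theorem stmt1 {M : Type*} [Nonempty M] (C : Set (M → ℝ)) :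
    tau (localFuncs C) = tau C := by
  apply le_antisymm
  · -- C ⊆ localFuncs C, so infimum over larger set is smaller
    refine le_iInf₂ fun f hf => ?_
    have hf' : f ∈ localFuncs C := fun p =>
      ⟨Set.univ, @isOpen_univ M (tau C), Set.mem_univ p, f, hf, fun _ _ => rfl⟩
    exact iInf₂_le_of_le f hf' le_rfl
  · -- every local C-function is continuous w.r.t. tau C
    refine le_iInf₂ fun f hf => ?_
    rw [← continuous_iff_le_induced]
    letI : TopologicalSpace M := tau C
    rw [continuous_iff_continuousAt]
    intro p
    obtain ⟨V, hV, hpV, α, hα, hfα⟩ := hf p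
    have hαc : Continuous α := by
      rw [continuous_iff_le_induced]
      exact iInf₂_le_of_le α hα le_rfl
    have hV' : IsOpen V := hV
    have heq : f =ᶠ[nhds p] α :=
      Filter.eventuallyEq_iff_exists_mem.mpr ⟨V, hV'.mem_nhds hpV, hfα⟩
    exact (continuousAt_congr heq).mpr hαc.continuousAt
end

section
/- The intersection of any nonempty family of Sikorski differential structures on a nonempty set M is again a Sikorski differential structure on M. -/
lemma tau_mono {M : Type*} {C D : Set (M → ℝ)} (h : C ⊆ D) : tau D ≤ tau C :=
  le_iInf₂ fun f hf => iInf₂_le f (h hf)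

/-- The intersection of any nonempty family of differential structures on a nonempty set
is a differential structure. -/
theorem stmt3 {M : Type*} [Nonempty M] {I : Type*} [Nonempty I]
    (C : I → Set (M → ℝ)) (hC : ∀ i, IsDiffStructure (C i)) :
    IsDiffStructure (⋂ i, C i) := by
  constructor
  · apply Set.Subset.antisymm
    · intro f hf
      refine Set.mem_iInter.2 fun i => ?_
      rw [← (hC i).1]
      intro p
      obtain ⟨V, hV, hp, α, hα, heq⟩ := hf p
      exact ⟨V, TopologicalSpace.le_def.1 (tau_mono (Set.iInter_subset C i)) V hV, hp, α,
        Set.mem_iInter.1 hα i, heq⟩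
    · intro f hf p
      exact ⟨Set.univ, (tau _).isOpen_univ, trivial, f, hf, fun x _ => rfl⟩
  · apply Set.Subset.antisymm
    · intro f hf
      refine Set.mem_iInter.2 fun i => ?_
      rw [← (hC i).2]
      obtain ⟨n, ω, α, hω, hα, heq⟩ := hf
      exact ⟨n, ω, α, hω, fun j => Set.mem_iInter.1 (hα j) i, heq⟩
    · intro f hf
      exact ⟨1, fun v => v 0, fun _ => f,
        (ContinuousLinearMap.proj 0 : (Fin 1 → ℝ) →L[ℝ] ℝ).contDiff,
        fun _ => hf, rfl⟩
end

section
/- For any family F of real-valued functions on a nonempty set M, the set (scF)_M (the localization of the smooth-superposition closure of F) is the smallest differential structure on M containing F. -/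
section Aux

variable {M : Type*}

lemma subset_sc (C : Set (M → ℝ)) : C ⊆ sc C := by
  intro f hf
  exact ⟨1, fun x => x 0, fun _ => f,
    (ContinuousLinearMap.proj (R := ℝ) (φ := fun _ : Fin 1 => ℝ) 0).contDiff,
    fun _ => hf, rfl⟩

lemma subset_localFuncs (C : Set (M → ℝ)) : C ⊆ localFuncs C := fun f hf _p =>
  ⟨Set.univ, (tau C).isOpen_univ, trivial, f, hf, fun _ _ => rfl⟩

lemma tau_anti {C C' : Set (M → ℝ)} (h : C ⊆ C') : tau C' ≤ tau C :=
  le_iInf₂ fun f hf => iInf₂_le f (h hf)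

lemma sc_mono {C C' : Set (M → ℝ)} (h : C ⊆ C') : sc C ⊆ sc C' := by
  rintro f ⟨n, ω, α, hω, hα, rfl⟩
  exact ⟨n, ω, α, hω, fun i => h (hα i), rfl⟩

lemma localFuncs_mono {C C' : Set (M → ℝ)} (h : C ⊆ C') :
    localFuncs C ⊆ localFuncs C' := by
  intro f hf p
  obtain ⟨V, hV, hpV, α, hα, heq⟩ := hf p
  exact ⟨V, IsOpen.mono hV (tau_anti h), hpV, α, h hα, heq⟩

lemma continuous_tau_of_mem {C : Set (M → ℝ)} {f : M → ℝ} (hf : f ∈ C) :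
    @Continuous _ _ (tau C) _ f :=
  continuous_iff_le_induced.2 (iInf₂_le f hf)

lemma continuous_tau_of_localFuncs {C : Set (M → ℝ)} {f : M → ℝ}
    (hf : f ∈ localFuncs C) : @Continuous _ _ (tau C) _ f := by
  letI := tau C
  rw [continuous_iff_continuousAt]
  intro p
  obtain ⟨V, hV, hpV, α, hα, heq⟩ := hf p
  have : IsOpen V := hV
  have hα' : ContinuousAt α p := (continuous_tau_of_mem hα).continuousAt
  exact hα'.congr (Filter.eventuallyEq_of_mem (this.mem_nhds hpV) fun x hx => (heq x hx).symm)

lemma tau_localFuncs (C : Set (M → ℝ)) : tau (localFuncs C) = tau C := by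
  refine le_antisymm (tau_anti (subset_localFuncs C)) ?_
  exact le_iInf₂ fun f hf => continuous_iff_le_induced.1 (continuous_tau_of_localFuncs hf)

lemma sc_sc (C : Set (M → ℝ)) : sc (sc C) ⊆ sc C := by
  rintro f ⟨n, ω, β, hω, hβ, rfl⟩
  choose m ω' γ hω' hγ hβeq using hβ
  classical
  refine ⟨Fintype.card (Σ i : Fin n, Fin (m i)),
    fun x => ω (fun i => ω' i (fun j => x (Fintype.equivFin (Σ i : Fin n, Fin (m i)) ⟨i, j⟩))),
    fun k => γ ((Fintype.equivFin (Σ i : Fin n, Fin (m i))).symm k).1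
      ((Fintype.equivFin (Σ i : Fin n, Fin (m i))).symm k).2, ?_, ?_, ?_⟩
  · exact hω.comp (contDiff_pi.2 fun i => (hω' i).comp (contDiff_pi.2 fun j =>
      (ContinuousLinearMap.proj (R := ℝ)
        (φ := fun _ : Fin (Fintype.card (Σ i : Fin n, Fin (m i))) => ℝ)
        (Fintype.equivFin (Σ i : Fin n, Fin (m i)) ⟨i, j⟩)).contDiff))
  · exact fun k => hγ _ _
  · funext p
    congr 1
    funext i
    rw [hβeq i]
    show ω' i (fun j => γ i j p) = _
    congr 1
    funext j
    exact (congrFun (congrArg (fun x : (i : Fin n) × Fin (m i) => γ x.1 x.2)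
      ((Fintype.equivFin ((i : Fin n) × Fin (m i))).symm_apply_apply ⟨i, j⟩)) p).symm

lemma localFuncs_idem (C : Set (M → ℝ)) :
    localFuncs (localFuncs C) = localFuncs C := by
  refine Set.Subset.antisymm ?_ (subset_localFuncs _)
  intro f hf p
  obtain ⟨V, hV, hpV, α, hα, hfα⟩ := hf p
  rw [tau_localFuncs] at hV
  obtain ⟨W, hW, hpW, β, hβ, hαβ⟩ := hα p
  letI := tau C
  exact ⟨V ∩ W, IsOpen.inter hV hW, ⟨hpV, hpW⟩, β, hβ,
    fun x hx => (hfα x hx.1).trans (hαβ x hx.2)⟩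

lemma sc_localFuncs_sc (F : Set (M → ℝ)) :
    sc (localFuncs (sc F)) ⊆ localFuncs (sc F) := by
  rintro f ⟨n, ω, α, hω, hα, rfl⟩
  intro p
  choose V hV hpV β hβ heq using fun i => hα i p
  letI := tau (sc F)
  refine ⟨⋂ i, V i, isOpen_iInter_of_finite hV, Set.mem_iInter.2 hpV,
    (fun q => ω (fun i => β i q)), sc_sc F ⟨n, ω, β, hω, hβ, rfl⟩, ?_⟩
  intro x hx
  show ω (fun i => α i x) = ω (fun i => β i x)
  congr 1
  funext i
  exact heq i x (Set.mem_iInter.1 hx i)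

end Aux

/-- (scF)_M is the smallest differential structure containing F. -/
theorem stmt5 {M : Type*} [Nonempty M] (F : Set (M → ℝ)) :
    IsDiffStructure (localFuncs (sc F)) ∧ F ⊆ localFuncs (sc F) ∧
      ∀ D : Set (M → ℝ), IsDiffStructure D → F ⊆ D → localFuncs (sc F) ⊆ D := by
  refine ⟨⟨localFuncs_idem (sc F),
      Set.Subset.antisymm (sc_localFuncs_sc F) (subset_sc _)⟩,
    fun f hf => subset_localFuncs _ (subset_sc _ hf), ?_⟩
  rintro D ⟨hL, hS⟩ hFD
  have h1 : sc F ⊆ D := hS ▸ sc_mono hFD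
  have h2 : localFuncs (sc F) ⊆ localFuncs D := localFuncs_mono h1
  exact hL ▸ h2
end

section
/- If F is a family of generators of the differential structure C on M which separates points of M, then the generator embedding φ_F: M → ℝ^F, φ_F(p) = (α(p))_{α ∈ F}, is a diffeomorphism of (M,C) onto its image φ_F(M) equipped with the subspace differential structure inherited from (ℝ^F, C^∞(ℝ^F)). -/
/-- The differential structure generated by a family `F`. -/
def genStructure {M : Type*} (F : Set (M → ℝ)) : Set (M → ℝ) :=
  localFuncs (sc F)

/-- Smoothness of a map between differential spaces. -/
def IsSmoothMap {M N : Type*} (C : Set (M → ℝ)) (D : Set (N → ℝ)) (φ : M → N) : Prop :=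
  ∀ β ∈ D, (β ∘ φ) ∈ C

/-- The subspace differential structure on a subset `A ⊆ N`,
generated by restrictions of elements of `D`. -/
def subStructure {N : Type*} (D : Set (N → ℝ)) (A : Set N) : Set (↥A → ℝ) :=
  genStructure {g | ∃ β ∈ D, g = fun a => β a.1}

section myaux
variable {M : Type*} {X Y : Set (M → ℝ)} {f : M → ℝ}
variable {M : Type*} {X Y : Set (M → ℝ)} {f : M → ℝ}

lemma mem_sc_self (hf : f ∈ X) : f ∈ sc X :=
  ⟨1, fun v => v 0, fun _ => f, contDiff_apply ℝ ℝ 0, fun _ => hf, rfl⟩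

lemma sc_comp {n : ℕ} {ω : (Fin n → ℝ) → ℝ} {α : Fin n → (M → ℝ)}
    (hω : ContDiff ℝ (⊤ : ℕ∞) ω) (hα : ∀ i, α i ∈ sc X) :
    (fun p => ω (fun i => α i p)) ∈ sc X := by
  choose m ωi β hωi hβ heqs using hα
  set σ := Fintype.equivFin (Σ i : Fin n, Fin (m i)) with hσ
  refine ⟨Fintype.card (Σ i : Fin n, Fin (m i)),
    fun v => ω (fun i => ωi i (fun j => v (σ ⟨i, j⟩))),
    fun k => β (σ.symm k).1 (σ.symm k).2, ?_, ?_, ?_⟩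
  · exact hω.comp (contDiff_pi.mpr fun i => (hωi i).comp
      (contDiff_pi.mpr fun j => contDiff_apply ℝ ℝ (σ ⟨i, j⟩)))
  · intro k; exact hβ _ _
  · funext p
    congr 1; funext i
    rw [congrFun (heqs i) p]
    congr 1; funext j
    have hh : σ.symm (σ ⟨i, j⟩) = ⟨i, j⟩ := Equiv.symm_apply_apply _ _
    show β i j p = β (σ.symm (σ ⟨i, j⟩)).fst (σ.symm (σ ⟨i, j⟩)).snd p
    rw [hh]

lemma tau_anti_s9 (h : X ⊆ Y) : tau Y ≤ tau X :=
  le_iInf₂ fun f hf => iInf₂_le f (h hf)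

lemma cont_of_mem (hf : f ∈ X) : @Continuous M ℝ (tau X) _ f := by
  letI := tau X
  exact continuous_iff_le_induced.mpr (iInf₂_le f hf)

lemma cont_of_local (hf : f ∈ localFuncs X) : @Continuous M ℝ (tau X) _ f := by
  letI := tau X
  rw [continuous_iff_continuousAt]
  intro p
  obtain ⟨V, hV, hpV, α, hα, heq⟩ := hf p
  exact (cont_of_mem hα).continuousAt.congr
    (Filter.eventuallyEq_of_mem (IsOpen.mem_nhds hV hpV) heq).symm

lemma subset_localFuncs_s9 : X ⊆ localFuncs X := fun f hf p =>
  ⟨Set.univ, (tau X).isOpen_univ, trivial, f, hf, fun _ _ => rfl⟩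

lemma subset_gen : X ⊆ genStructure X := fun f hf => subset_localFuncs_s9 (mem_sc_self hf)

lemma tau_gen : tau (genStructure X) = tau (sc X) := by
  refine le_antisymm (tau_anti_s9 subset_localFuncs_s9) (le_iInf₂ fun f hf => ?_)
  letI := tau (sc X)
  exact continuous_iff_le_induced.mp (cont_of_local hf)

lemma sc_gen : sc (genStructure X) = genStructure X := by
  refine Set.Subset.antisymm ?_ (fun f hf => mem_sc_self hf)
  rintro f ⟨n, ω, α, hω, hα, rfl⟩ p
  choose V hVopen hpV h hh heq using fun i => hα i p
  letI := tau (sc X)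
  refine ⟨⋂ i, V i, isOpen_iInter_of_finite hVopen, Set.mem_iInter.mpr hpV,
    fun q => ω (fun i => h i q), sc_comp hω hh, fun x hx => ?_⟩
  show ω (fun i => α i x) = ω (fun i => h i x)
  congr 1; funext i
  exact heq i x (Set.mem_iInter.mp hx i)

lemma loc_gen : localFuncs (genStructure X) = genStructure X := by
  refine Set.Subset.antisymm ?_ subset_localFuncs_s9
  intro f hf p
  obtain ⟨V, hV, hpV, α, hα, heq⟩ := hf p
  rw [tau_gen] at hV
  obtain ⟨V', hV', hpV', h, hh, heq'⟩ := hα p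
  letI := tau (sc X)
  exact ⟨V ∩ V', IsOpen.inter hV hV', ⟨hpV, hpV'⟩, h, hh,
    fun x hx => (heq x hx.1).trans (heq' x hx.2)⟩

lemma gen_idem : genStructure (genStructure X) = genStructure X := by
  show localFuncs (sc (genStructure X)) = _
  rw [sc_gen, loc_gen]

lemma pullback {N : Type*} {Y : Set (N → ℝ)} {φ : M → N}
    (h1 : ∀ g ∈ Y, (fun p => g (φ p)) ∈ sc X) :
    (∀ g ∈ sc Y, (fun p => g (φ p)) ∈ sc X) ∧
    @Continuous M N (tau (sc X)) (tau (sc Y)) φ ∧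
    ∀ β ∈ genStructure Y, (fun p => β (φ p)) ∈ genStructure X := by
  have part1 : ∀ g ∈ sc Y, (fun p => g (φ p)) ∈ sc X := by
    rintro g ⟨n, ω, α, hω, hα, rfl⟩
    exact sc_comp hω (fun i => h1 _ (hα i))
  have part2 : @Continuous M N (tau (sc X)) (tau (sc Y)) φ := by
    letI := tau (sc X)
    rw [tau]
    refine continuous_iInf_rng.mpr fun g => continuous_iInf_rng.mpr fun hg => ?_
    exact continuous_induced_rng.mpr (cont_of_mem (part1 g hg))
  refine ⟨part1, part2, fun β hβ p => ?_⟩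
  obtain ⟨W, hW, hpW, h, hh, heq⟩ := hβ (φ p)
  letI := tau (sc X)
  letI := tau (sc Y)
  exact ⟨φ ⁻¹' W, part2.isOpen_preimage W hW, hpW, fun q => h (φ q), part1 h hh,
    fun x hx => heq (φ x) hx⟩
end myaux

/-- If the generating family F separates points, the generator embedding
φ_F : M → ℝ^F is a diffeomorphism of (M,C) onto its image, with the image carrying
the subspace differential structure of (ℝ^F, C^∞(ℝ^F)). -/
theorem stmt9 {M : Type*} [Nonempty M] (F : Set (M → ℝ)) (C : Set (M → ℝ))
    (hgen : C = genStructure F)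
    (hsep : ∀ p q : M, p ≠ q → ∃ f ∈ F, f p ≠ f q) :
    let φ : M → (↥F → ℝ) := fun p f => (f : M → ℝ) p
    -- C^∞(ℝ^F): the differential structure on ℝ^F generated by the projections
    let Cinf : Set ((↥F → ℝ) → ℝ) := genStructure {g | ∃ f : ↥F, g = fun x => x f}
    let e : M → ↥(Set.range φ) := Set.rangeFactorization φ
    Function.Bijective e ∧
      IsSmoothMap C (subStructure Cinf (Set.range φ)) e ∧
      IsSmoothMap (subStructure Cinf (Set.range φ)) C (Function.invFun e) := by
  intro φ Cinf e
  subst hgen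
  have hsurj : Function.Surjective e := Set.rangeFactorization_surjective
  have hinj : Function.Injective e := by
    intro p q h
    by_contra hne
    obtain ⟨f, hf, hfn⟩ := hsep p q hne
    exact hfn (congrFun (congrArg Subtype.val h) ⟨f, hf⟩)
  have hP : ∀ g ∈ ({g | ∃ f : ↥F, g = fun x => x f} : Set ((↥F → ℝ) → ℝ)),
      (fun p => g (φ p)) ∈ sc F := by
    rintro g ⟨f, rfl⟩
    exact mem_sc_self f.2
  have A1 := (pullback hP).2.2
  set G : Set (↥(Set.range φ) → ℝ) := {g | ∃ β ∈ Cinf, g = fun a => β a.1} with hG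
  have hGpull : ∀ g ∈ G, (fun p => g (e p)) ∈ sc (genStructure F) := by
    rintro g ⟨β, hβ, rfl⟩
    exact mem_sc_self (A1 β hβ)
  have A2 := (pullback hGpull).2.2
  have hsub : subStructure Cinf (Set.range φ) = genStructure G := rfl
  refine ⟨⟨hinj, hsurj⟩, ?_, ?_⟩
  · intro β hβ
    have hb := A2 β (by rw [hsub] at hβ; exact hβ)
    rwa [gen_idem] at hb
  · intro γ hγ
    rw [hsub]
    have key : TopologicalSpace.induced e (tau (sc G)) ≤ tau (sc F) := by
      refine le_iInf₂ fun f hf => ?_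
      obtain ⟨n, ω, α, hω, hα, rfl⟩ := hf
      have hh : (fun x : ↥(Set.range φ) => ω (fun i => x.1 ⟨α i, hα i⟩)) ∈ sc G := by
        refine ⟨n, ω, fun i => fun x => x.1 ⟨α i, hα i⟩, hω, fun i => ?_, rfl⟩
        exact ⟨fun x => x ⟨α i, hα i⟩, subset_gen ⟨⟨α i, hα i⟩, rfl⟩, rfl⟩
      calc TopologicalSpace.induced e (tau (sc G))
          ≤ TopologicalSpace.induced e (TopologicalSpace.induced
              (fun x : ↥(Set.range φ) => ω (fun i => x.1 ⟨α i, hα i⟩)) inferInstance) :=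
            induced_mono (iInf₂_le _ hh)
        _ = TopologicalSpace.induced (fun p => ω (fun i => α i p)) inferInstance := by
            rw [induced_compose]
            rfl
    show γ ∘ Function.invFun e ∈ localFuncs (sc G)
    intro a
    obtain ⟨V, hV, hpV, h, hh, heq⟩ := hγ (Function.invFun e a)
    obtain ⟨n, ω, α, hω, hα, rfl⟩ := hh
    have hVind : (TopologicalSpace.induced e (tau (sc G))).IsOpen V := key V hV
    letI := tau (sc G)
    obtain ⟨W, hW, hWV⟩ := isOpen_induced_iff.mp hVind
    have hea : e (Function.invFun e a) = a := Function.rightInverse_invFun hsurj a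
    have haW : a ∈ W := by
      have h1 : Function.invFun e a ∈ e ⁻¹' W := by rw [hWV]; exact hpV
      have h2 : e (Function.invFun e a) ∈ W := h1
      rwa [hea] at h2
    have hH : (fun x : ↥(Set.range φ) => ω (fun i => x.1 ⟨α i, hα i⟩)) ∈ sc G := by
      refine ⟨n, ω, fun i => fun x => x.1 ⟨α i, hα i⟩, hω, fun i => ?_, rfl⟩
      exact ⟨fun x => x ⟨α i, hα i⟩, subset_gen ⟨⟨α i, hα i⟩, rfl⟩, rfl⟩
    refine ⟨W, hW, haW, _, hH, fun x hx => ?_⟩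
    have hex : e (Function.invFun e x) = x := Function.rightInverse_invFun hsurj x
    have hmem : Function.invFun e x ∈ V := by
      rw [← hWV]; show e _ ∈ W; rw [hex]; exact hx
    refine (heq _ hmem).trans ?_
    show ω (fun i => (e (Function.invFun e x)).1 ⟨α i, hα i⟩) = _
    rw [hex]
end
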